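/- Let (Q,+) be an NK-loop and let φ be a special endomorphism of (Q,+) such that 2z + φ(z) ∈ N(Q,+) for all z ∈ Q. Define f : Q → Q by f(z) = z + φ(z) for all z ∈ Q. Then f is an endomorphism of (Q,+) satisfying condition (F), i.e. -x + f(x) ∈ K(Q,+) and x + f(x) ∈ N(Q,+) for all x ∈ Q. -/
import Mathlib


/- Preamble: NK-loops, written additively.
   A loop is a set with `+`, a neutral element `0`, and unique left/right
   solvability.  An NK-loop is a loop in which every element decomposes as
   `x = u + v = v + u` with `u` in the nucleus and `v` in the Moufang center.
   Every NK-loop is a diassociative Moufang loop, so every element has a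
   (uniquely determined) two-sided inverse `-x`, which we include in the
   structure. -/

universe u

section Preamble
variable {Q : Type u}

/-- `a` belongs to the nucleus `N(Q,+)`. -/
def inNucleus [Add Q] (a : Q) : Prop :=
  ∀ x y : Q, (a + x) + y = a + (x + y) ∧ (x + a) + y = x + (a + y) ∧
    (x + y) + a = x + (y + a)

/-- `a` belongs to the Moufang center `K(Q,+)`. -/
def inMoufangCenter [Add Q] (a : Q) : Prop :=
  ∀ x y : Q, (a + a) + (x + y) = (a + x) + (a + y)

/-- `a` belongs to the center `Z(Q,+) = N(Q,+) ∩ K(Q,+)`. -/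
def inCenter [Add Q] (a : Q) : Prop := inNucleus a ∧ inMoufangCenter a

/-- An NK-loop `(Q,+)`: a loop in which every element decomposes as a sum
    `x = u + v = v + u` with `u ∈ N(Q,+)` and `v ∈ K(Q,+)`. -/
class NKLoop (Q : Type u) extends Add Q, Zero Q, Neg Q where
  zero_add : ∀ x : Q, 0 + x = x
  add_zero : ∀ x : Q, x + 0 = x
  exu_left : ∀ a b : Q, ∃! x : Q, a + x = b
  exu_right : ∀ a b : Q, ∃! y : Q, y + a = b
  neg_add_cancel : ∀ x : Q, -x + x = 0
  add_neg_cancel : ∀ x : Q, x + -x = 0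
  nk_decomp : ∀ x : Q, ∃ u v : Q, inNucleus u ∧ inMoufangCenter v ∧
      x = u + v ∧ x = v + u

variable [Add Q] [Zero Q] [Neg Q]

/-- Natural multiple `n • x`. -/
def nsmulL : ℕ → Q → Q
  | 0, _ => 0
  | n + 1, x => x + nsmulL n x

/-- Integer multiple `m • x` (unambiguous by diassociativity). -/
def zsmulL : ℤ → Q → Q
  | Int.ofNat n, x => nsmulL n x
  | Int.negSucc n, x => -(nsmulL (n + 1) x)

/-- `f` is an endomorphism of `(Q,+)`. -/
def IsEndo (f : Q → Q) : Prop := ∀ x y : Q, f (x + y) = f x + f y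

/-- `a` belongs to the center of the (commutative) subloop `(K(Q,+),+)`:
    `a ∈ K(Q,+)` and `a` satisfies the nucleus conditions relative to
    elements of `K(Q,+)`. -/
def inCenterOfK (a : Q) : Prop :=
  inMoufangCenter a ∧ ∀ x y : Q, inMoufangCenter x → inMoufangCenter y →
    (a + x) + y = a + (x + y) ∧ (x + a) + y = x + (a + y) ∧
      (x + y) + a = x + (y + a)

/-- `f` is a special endomorphism of the NK-loop `(Q,+)`:
    `f(Q) ⊆ K(Q,+)`, the restriction of `f` to `K(Q,+)` is a quasicentral
    endomorphism of the (commutative) loop `(K(Q,+),+)`, and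
    `f(N(Q,+)) ⊆ N(Q,+)`. -/
def IsSpecial (f : Q → Q) : Prop :=
  IsEndo f ∧ (∀ x : Q, inMoufangCenter (f x)) ∧
  (∃ m : ℤ, ∀ x : Q, inMoufangCenter x → inCenterOfK (zsmulL m x + f x)) ∧
  (∀ x : Q, inNucleus x → inNucleus (f x))

/-- `f` satisfies condition (F): `-x + f(x) ∈ K(Q,+)` and
    `x + f(x) ∈ N(Q,+)` for all `x`. -/
def SatisfiesF (f : Q → Q) : Prop :=
  ∀ x : Q, inMoufangCenter (-x + f x) ∧ inNucleus (x + f x)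

end Preamble

namespace NKAux
variable {Q : Type u} [NKLoop Q]

lemma zadd (x : Q) : 0 + x = x := NKLoop.zero_add x
lemma addz (x : Q) : x + 0 = x := NKLoop.add_zero x
lemma nadd (x : Q) : -x + x = 0 := NKLoop.neg_add_cancel x
lemma addn (x : Q) : x + -x = 0 := NKLoop.add_neg_cancel x

lemma lcancel {a x y : Q} (h : a + x = a + y) : x = y := by
  obtain ⟨z, _, hu⟩ := NKLoop.exu_left a (a + y)
  exact (hu x h).trans (hu y rfl).symm

lemma rcancel {a x y : Q} (h : x + a = y + a) : x = y := by
  obtain ⟨z, _, hu⟩ := NKLoop.exu_right a (y + a)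
  exact (hu x h).trans (hu y rfl).symm

lemma neg_uniq_r {a b : Q} (h : a + b = 0) : b = -a :=
  lcancel (h.trans (addn a).symm)

lemma neg_uniq_l {a b : Q} (h : b + a = 0) : b = -a :=
  rcancel (h.trans (nadd a).symm)

lemma negneg (v : Q) : -(-v) = v := (neg_uniq_r (nadd v)).symm

lemma nuc1 {u : Q} (h : inNucleus u) (x y : Q) : (u + x) + y = u + (x + y) := (h x y).1
lemma nuc2 {u : Q} (h : inNucleus u) (x y : Q) : (x + u) + y = x + (u + y) := (h x y).2.1
lemma nuc3 {u : Q} (h : inNucleus u) (x y : Q) : (x + y) + u = x + (y + u) := (h x y).2.2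

lemma nuc_add {u w : Q} (hu : inNucleus u) (hw : inNucleus w) : inNucleus (u + w) := by
  intro x y
  refine ⟨?_, ?_, ?_⟩
  · calc ((u + w) + x) + y = (u + (w + x)) + y := by rw [nuc1 hu]
      _ = u + ((w + x) + y) := by rw [nuc1 hu]
      _ = u + (w + (x + y)) := by rw [nuc1 hw]
      _ = (u + w) + (x + y) := by rw [nuc1 hu]
  · calc (x + (u + w)) + y = ((x + u) + w) + y := by rw [nuc2 hu]
      _ = (x + u) + (w + y) := by rw [nuc2 hw]
      _ = x + (u + (w + y)) := by rw [nuc2 hu]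
      _ = x + ((u + w) + y) := by rw [nuc1 hu]
  · calc (x + y) + (u + w) = ((x + y) + u) + w := by rw [nuc2 hu]
      _ = (x + (y + u)) + w := by rw [nuc3 hu]
      _ = x + ((y + u) + w) := by rw [nuc3 hw]
      _ = x + (y + (u + w)) := by rw [nuc2 hu]

lemma nuc_neg {u : Q} (hu : inNucleus u) : inNucleus (-u) := by
  have pos2 : ∀ x y : Q, (x + -u) + y = x + (-u + y) := by
    intro x y
    have hx : (x + -u) + u = x := by rw [nuc3 hu, nadd, addz]
    calc (x + -u) + y = (x + -u) + ((u + -u) + y) := by rw [addn, zadd]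
      _ = (x + -u) + (u + (-u + y)) := by rw [nuc1 hu]
      _ = ((x + -u) + u) + (-u + y) := by rw [nuc2 hu]
      _ = x + (-u + y) := by rw [hx]
  intro x y
  refine ⟨?_, pos2 x y, ?_⟩
  · apply lcancel (a := u)
    calc u + ((-u + x) + y) = (u + (-u + x)) + y := (nuc1 hu (-u + x) y).symm
      _ = ((u + -u) + x) + y := by rw [← nuc1 hu (-u) x]
      _ = x + y := by rw [addn, zadd]
      _ = (u + -u) + (x + y) := by rw [addn, zadd]
      _ = u + (-u + (x + y)) := nuc1 hu (-u) (x + y)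
  · apply rcancel (a := u)
    calc ((x + y) + -u) + u = (x + y) + (-u + u) := nuc3 hu (x + y) (-u)
      _ = x + y := by rw [nadd, addz]
      _ = x + (y + 0) := by rw [addz]
      _ = x + (y + (-u + u)) := by rw [nadd]
      _ = x + ((y + -u) + u) := by rw [← nuc3 hu y (-u)]
      _ = (x + (y + -u)) + u := (nuc3 hu x (y + -u)).symm

section Kfacts
variable {v : Q}

lemma Kid (hv : inMoufangCenter v) (x y : Q) :
    (v + v) + (x + y) = (v + x) + (v + y) := hv x y

lemma Ksq (hv : inMoufangCenter v) (c : Q) : v + (v + c) = (v + v) + c := by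
  have h := hv 0 c
  rw [zadd, addz] at h
  exact h.symm

lemma Kstar2 (hv : inMoufangCenter v) (y : Q) : (v + v) + (-v + y) = v + y := by
  have h := hv (-v) y
  rw [addn, zadd] at h
  exact h

lemma Kstar3 (hv : inMoufangCenter v) (x : Q) : (v + v) + (x + -v) = v + x := by
  have h := hv x (-v)
  rw [addn, addz] at h
  exact h

lemma comm_neg (hv : inMoufangCenter v) (x : Q) : x + -v = -v + x :=
  lcancel ((Kstar3 hv x).trans (Kstar2 hv x).symm)

lemma lipK (hv : inMoufangCenter v) (c : Q) : -v + (v + c) = c := by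
  apply lcancel (a := v + v)
  rw [Kstar2 hv (v + c), Ksq hv c]

lemma riplK (hv : inMoufangCenter v) (c : Q) : v + (-v + c) = c := by
  apply lcancel (a := -v)
  rw [lipK hv (-v + c)]

lemma Kid1 (hv : inMoufangCenter v) (x y : Q) :
    (v + x) + y = (v + v) + (x + (-v + y)) := by
  have h := hv x (-v + y)
  rw [riplK hv y] at h
  exact h.symm

lemma Kid2 (hv : inMoufangCenter v) (x y : Q) :
    (v + v) + ((-v + x) + (-v + y)) = x + y := by
  have h := hv (-v + x) (-v + y)
  rw [riplK hv x, riplK hv y] at h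
  exact h

end Kfacts

lemma need1 (z c : Q) : z + (z + c) = (z + z) + c := by
  obtain ⟨u, v, hu, hv, h1, h2⟩ := NKLoop.nk_decomp z
  have hzz : z + z = u + ((v + v) + u) := by
    calc z + z = (u + v) + (v + u) := by rw [← h2, ← h1]
      _ = u + (v + (v + u)) := by rw [nuc1 hu]
      _ = u + ((v + v) + u) := by rw [Ksq hv]
  calc z + (z + c) = (u + v) + ((v + u) + c) := by rw [← h2, ← h1]
    _ = (u + v) + (v + (u + c)) := by rw [nuc2 hu]
    _ = u + (v + (v + (u + c))) := by rw [nuc1 hu]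
    _ = u + ((v + v) + (u + c)) := by rw [Ksq hv]
    _ = u + (((v + v) + u) + c) := by rw [nuc2 hu]
    _ = (u + ((v + v) + u)) + c := by rw [nuc1 hu]
    _ = (z + z) + c := by rw [hzz]

lemma lip (z c : Q) : -z + (z + c) = c := by
  obtain ⟨u, v, hu, hv, h1, h2⟩ := NKLoop.nk_decomp z
  have hnu := nuc_neg hu
  have hnz : -z = -v + -u := by
    symm
    apply neg_uniq_l
    calc (-v + -u) + z = (-v + -u) + (u + v) := by rw [h1]
      _ = -v + (-u + (u + v)) := by rw [nuc2 hnu]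
      _ = -v + ((-u + u) + v) := by rw [nuc1 hnu]
      _ = -v + v := by rw [nadd, zadd]
      _ = 0 := nadd v
  calc -z + (z + c) = (-v + -u) + (z + c) := by rw [hnz]
    _ = (-v + -u) + ((u + v) + c) := by rw [h1]
    _ = (-v + -u) + (u + (v + c)) := by rw [nuc1 hu]
    _ = -v + (-u + (u + (v + c))) := by rw [nuc2 hnu]
    _ = -v + ((-u + u) + (v + c)) := by rw [nuc1 hnu]
    _ = -v + (v + c) := by rw [nadd, zadd]
    _ = c := lipK hv c

lemma ripl (z c : Q) : z + (-z + c) = c := by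
  apply lcancel (a := -z)
  rw [lip z (-z + c)]

lemma sqK {v : Q} (hv : inMoufangCenter v) : inMoufangCenter (v + v) := by
  intro x y
  have h2 : ((v + v) + x) + ((v + v) + y) = (v + v) + ((v + x) + (v + y)) := by
    calc ((v + v) + x) + ((v + v) + y) = (v + (v + x)) + ((v + v) + y) := by
          rw [Ksq hv x]
      _ = (v + v) + ((v + x) + (-v + ((v + v) + y))) := Kid1 hv (v + x) ((v + v) + y)
      _ = (v + v) + ((v + x) + (-v + (v + (v + y)))) := by rw [Ksq hv y]
      _ = (v + v) + ((v + x) + (v + y)) := by rw [lipK hv (v + y)]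
  calc ((v + v) + (v + v)) + (x + y) = (v + v) + ((v + v) + (x + y)) :=
        (need1 (v + v) (x + y)).symm
    _ = (v + v) + ((v + x) + (v + y)) := by rw [Kid hv x y]
    _ = ((v + v) + x) + ((v + v) + y) := h2.symm

lemma neg_sq {v : Q} (hv : inMoufangCenter v) : -(v + v) = -v + -v := by
  symm
  apply neg_uniq_r
  calc (v + v) + (-v + -v) = v + (v + (-v + -v)) := (need1 v (-v + -v)).symm
    _ = v + -v := by rw [riplK hv (-v)]
    _ = 0 := addn v

lemma negK {v : Q} (hv : inMoufangCenter v) : inMoufangCenter (-v) := by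
  intro x y
  apply lcancel (a := v + v)
  calc (v + v) + ((-v + -v) + (x + y)) = (v + v) + (-(v + v) + (x + y)) := by
        rw [← neg_sq hv]
    _ = x + y := riplK (sqK hv) (x + y)
    _ = (v + v) + ((-v + x) + (-v + y)) := (Kid2 hv x y).symm

lemma commK {v : Q} (hv : inMoufangCenter v) (x : Q) : v + x = x + v := by
  have h := comm_neg (negK hv) x
  rw [negneg v] at h
  exact h.symm

lemma negaddK {s t : Q} (hs : inMoufangCenter s) (ht : inMoufangCenter t) :
    -(s + t) = -s + -t := by
  have hnt := negK ht
  have e1 : t + s = -t + ((t + t) + s) := by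
    rw [← need1 t s, lipK ht (t + s)]
  symm
  apply neg_uniq_r
  calc (s + t) + (-s + -t) = (t + s) + (-t + -s) := by
        rw [commK hs t, commK (negK hs) (-t)]
    _ = (-t + ((t + t) + s)) + (-t + -s) := by rw [← e1]
    _ = (-t + -t) + (((t + t) + s) + -s) := (Kid hnt ((t + t) + s) (-s)).symm
    _ = (-t + -t) + (-s + ((t + t) + s)) := by rw [comm_neg hs ((t + t) + s)]
    _ = (-t + -t) + (-s + (s + (t + t))) := by rw [commK (sqK ht) s]
    _ = (-t + -t) + (t + t) := by rw [lipK hs (t + t)]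
    _ = -(t + t) + (t + t) := by rw [← neg_sq ht]
    _ = 0 := nadd (t + t)

/-- The key identity in the Moufang center, given the nuclearity side conditions. -/
lemma keyK {s t a b : Q} (hs : inMoufangCenter s) (ht : inMoufangCenter t)
    (hn1 : inNucleus ((s + s) + a)) (hn2 : inNucleus ((t + t) + b))
    (_hNn3 : inNucleus (((s + t) + (s + t)) + (a + b))) :
    (s + t) + (a + b) = (s + a) + (t + b) := by
  set n1 := (s + s) + a with hdef1
  set n2 := (t + t) + b with hdef2
  have hNn : inNucleus (n1 + n2) := nuc_add hn1 hn2
  have ha : a = -(s + s) + n1 := (lip (s + s) a).symm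
  have hb : b = -(t + t) + n2 := (lip (t + t) b).symm
  have hsa : s + a = -s + n1 := by
    calc s + a = s + (-(s + s) + n1) := by rw [← ha]
      _ = s + ((-s + -s) + n1) := by rw [neg_sq hs]
      _ = (s + (-s + -s)) + n1 := (nuc3 hn1 s (-s + -s)).symm
      _ = -s + n1 := by rw [riplK hs (-s)]
  have htb : t + b = -t + n2 := by
    calc t + b = t + (-(t + t) + n2) := by rw [← hb]
      _ = t + ((-t + -t) + n2) := by rw [neg_sq ht]
      _ = (t + (-t + -t)) + n2 := (nuc3 hn2 t (-t + -t)).symm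
      _ = -t + n2 := by rw [riplK ht (-t)]
  have hab : a + b = (-(s + s) + -(t + t)) + (n1 + n2) := by
    calc a + b = (-(s + s) + n1) + (-(t + t) + n2) := by rw [← ha, ← hb]
      _ = -(s + s) + (n1 + (-(t + t) + n2)) := nuc2 hn1 (-(s + s)) (-(t + t) + n2)
      _ = -(s + s) + ((n1 + -(t + t)) + n2) := by rw [nuc1 hn1 (-(t + t)) n2]
      _ = -(s + s) + ((-(t + t) + n1) + n2) := by rw [comm_neg (sqK ht) n1]
      _ = -(s + s) + (-(t + t) + (n1 + n2)) := by rw [nuc2 hn1 (-(t + t)) n2]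
      _ = (-(s + s) + -(t + t)) + (n1 + n2) := (nuc3 hNn (-(s + s)) (-(t + t))).symm
  have hW : (s + t) + (-(s + s) + -(t + t)) = -(s + t) := by
    calc (s + t) + (-(s + s) + -(t + t)) = (s + t) + ((-s + -s) + (-t + -t)) := by
          rw [neg_sq hs, neg_sq ht]
      _ = (s + t) + ((-s + -t) + (-s + -t)) := by rw [← Kid (negK hs) (-t) (-t)]
      _ = (s + t) + (-(s + t) + -(s + t)) := by rw [← negaddK hs ht]
      _ = -(s + t) := ripl (s + t) (-(s + t))
  calc (s + t) + (a + b)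
      = (s + t) + ((-(s + s) + -(t + t)) + (n1 + n2)) := by rw [hab]
    _ = ((s + t) + (-(s + s) + -(t + t))) + (n1 + n2) := (nuc3 hNn _ _).symm
    _ = -(s + t) + (n1 + n2) := by rw [hW]
    _ = (-s + -t) + (n1 + n2) := by rw [negaddK hs ht]
    _ = -s + (-t + (n1 + n2)) := nuc3 hNn (-s) (-t)
    _ = -s + ((-t + n1) + n2) := by rw [nuc2 hn1 (-t) n2]
    _ = -s + ((n1 + -t) + n2) := by rw [← comm_neg ht n1]
    _ = -s + (n1 + (-t + n2)) := by rw [nuc1 hn1 (-t) n2]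
    _ = (-s + n1) + (-t + n2) := (nuc2 hn1 (-s) (-t + n2)).symm
    _ = (s + a) + (t + b) := by rw [← hsa, ← htb]

/-- A nuclear element commutes with a sum of two Moufang-center elements. -/
lemma comm_nuc_KK {q s t : Q} (hq : inNucleus q) (hs : inMoufangCenter s)
    (ht : inMoufangCenter t) : q + (s + t) = (s + t) + q := by
  calc q + (s + t) = (q + s) + t := (nuc1 hq s t).symm
    _ = (s + q) + t := by rw [← commK hs q]
    _ = s + (q + t) := nuc2 hq s t
    _ = s + (t + q) := by rw [← commK ht q]
    _ = (s + t) + q := (nuc3 hq s t).symm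

lemma comm_sq {n z : Q} (hn : inNucleus n) (h : n + z = z + n) :
    n + (z + z) = (z + z) + n := by
  calc n + (z + z) = (n + z) + z := (nuc1 hn z z).symm
    _ = (z + n) + z := by rw [h]
    _ = z + (n + z) := nuc2 hn z z
    _ = z + (z + n) := by rw [h]
    _ = (z + z) + n := (nuc3 hn z z).symm

end NKAux

/- STATEMENT 15: If `φ` is a special endomorphism of an NK-loop with
   `2z + φ(z) ∈ N(Q,+)` for all `z`, then `f(z) = z + φ(z)` defines an
   endomorphism of `(Q,+)` satisfying condition (F). -/
theorem special_to_condF {Q : Type u} [NKLoop Q] (φ : Q → Q)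
    (hφ : IsSpecial φ) (hN : ∀ z : Q, inNucleus ((z + z) + φ z))
    (f : Q → Q) (hf : ∀ z : Q, f z = z + φ z) :
    IsEndo f ∧ SatisfiesF f := by
  obtain ⟨hend, hK, -, -⟩ := hφ
  refine ⟨?_, ?_⟩
  · intro x y
    obtain ⟨p, s, hp, hs, hx1, hx2⟩ := NKLoop.nk_decomp x
    obtain ⟨q, t, hq, ht, hy1, hy2⟩ := NKLoop.nk_decomp y
    have ha := hK x
    have hb := hK y
    have hPq : inNucleus (p + q) := NKAux.nuc_add hp hq
    have hPP : inNucleus (p + p) := NKAux.nuc_add hp hp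
    have hQQ : inNucleus (q + q) := NKAux.nuc_add hq hq
    have hxx : x + x = (p + p) + (s + s) := by
      calc x + x = (p + s) + (s + p) := by rw [← hx2, ← hx1]
        _ = p + (s + (s + p)) := NKAux.nuc1 hp s (s + p)
        _ = p + ((s + s) + p) := by rw [NKAux.Ksq hs p]
        _ = p + (p + (s + s)) := by rw [NKAux.commK (NKAux.sqK hs) p]
        _ = (p + p) + (s + s) := NKAux.need1 p (s + s)
    have hyy : y + y = (q + q) + (t + t) := by
      calc y + y = (q + t) + (t + q) := by rw [← hy2, ← hy1]
        _ = q + (t + (t + q)) := NKAux.nuc1 hq t (t + q)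
        _ = q + ((t + t) + q) := by rw [NKAux.Ksq ht q]
        _ = q + (q + (t + t)) := by rw [NKAux.commK (NKAux.sqK ht) q]
        _ = (q + q) + (t + t) := NKAux.need1 q (t + t)
    have hm1 : inNucleus ((p + p) + ((s + s) + φ x)) := by
      have h := hN x
      rw [hxx, NKAux.nuc1 hPP (s + s) (φ x)] at h
      exact h
    have hn1 : inNucleus ((s + s) + φ x) := by
      have h := NKAux.nuc_add (NKAux.nuc_neg hPP) hm1
      rwa [NKAux.lip (p + p) ((s + s) + φ x)] at h
    have hm2 : inNucleus ((q + q) + ((t + t) + φ y)) := by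
      have h := hN y
      rw [hyy, NKAux.nuc1 hQQ (t + t) (φ y)] at h
      exact h
    have hn2 : inNucleus ((t + t) + φ y) := by
      have h := NKAux.nuc_add (NKAux.nuc_neg hQQ) hm2
      rwa [NKAux.lip (q + q) ((t + t) + φ y)] at h
    have hxy : x + y = (p + q) + (s + t) := by
      calc x + y = (p + s) + (q + t) := by rw [← hx1, ← hy1]
        _ = p + (s + (q + t)) := NKAux.nuc1 hp s (q + t)
        _ = p + ((s + q) + t) := by rw [← NKAux.nuc2 hq s t]
        _ = p + ((q + s) + t) := by rw [← NKAux.commK hs q]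
        _ = p + (q + (s + t)) := by rw [NKAux.nuc1 hq s t]
        _ = (p + q) + (s + t) := (NKAux.nuc1 hp q (s + t)).symm
    have hcq : q + (s + t) = (s + t) + q := NKAux.comm_nuc_KK hq hs ht
    have hcp : p + (s + t) = (s + t) + p := NKAux.comm_nuc_KK hp hs ht
    have hcPT : (p + q) + (s + t) = (s + t) + (p + q) := by
      calc (p + q) + (s + t) = p + (q + (s + t)) := NKAux.nuc1 hp q (s + t)
        _ = p + ((s + t) + q) := by rw [hcq]
        _ = (p + (s + t)) + q := (NKAux.nuc3 hq p (s + t)).symm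
        _ = ((s + t) + p) + q := by rw [hcp]
        _ = (s + t) + (p + q) := NKAux.nuc3 hq (s + t) p
    have hcPTT : (p + q) + ((s + t) + (s + t)) = ((s + t) + (s + t)) + (p + q) :=
      NKAux.comm_sq hPq hcPT
    have hxyxy : (x + y) + (x + y) = ((p + q) + (p + q)) + ((s + t) + (s + t)) := by
      calc (x + y) + (x + y) = ((p + q) + (s + t)) + ((p + q) + (s + t)) := by rw [hxy]
        _ = (p + q) + ((s + t) + ((p + q) + (s + t))) := NKAux.nuc1 hPq _ _
        _ = (p + q) + ((s + t) + ((s + t) + (p + q))) := by rw [hcPT]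
        _ = (p + q) + (((s + t) + (s + t)) + (p + q)) := by
              rw [NKAux.need1 (s + t) (p + q)]
        _ = (p + q) + ((p + q) + ((s + t) + (s + t))) := by rw [← hcPTT]
        _ = ((p + q) + (p + q)) + ((s + t) + (s + t)) := NKAux.need1 (p + q) _
    have hQQ2 : inNucleus ((p + q) + (p + q)) := NKAux.nuc_add hPq hPq
    have hm3 : inNucleus (((p + q) + (p + q)) + (((s + t) + (s + t)) + (φ x + φ y))) := by
      have h := hN (x + y)
      rw [hend x y, hxyxy, NKAux.nuc1 hQQ2 ((s + t) + (s + t)) (φ x + φ y)] at h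
      exact h
    have hn3 : inNucleus (((s + t) + (s + t)) + (φ x + φ y)) := by
      have h := NKAux.nuc_add (NKAux.nuc_neg hQQ2) hm3
      rwa [NKAux.lip ((p + q) + (p + q)) (((s + t) + (s + t)) + (φ x + φ y))] at h
    have hkey : (s + t) + (φ x + φ y) = (s + φ x) + (t + φ y) :=
      NKAux.keyK hs ht hn1 hn2 hn3
    calc f (x + y) = (x + y) + φ (x + y) := hf (x + y)
      _ = (x + y) + (φ x + φ y) := by rw [hend x y]
      _ = ((p + q) + (s + t)) + (φ x + φ y) := by rw [hxy]
      _ = (p + q) + ((s + t) + (φ x + φ y)) := NKAux.nuc1 hPq _ _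
      _ = (p + q) + ((s + φ x) + (t + φ y)) := by rw [hkey]
      _ = p + (q + ((s + φ x) + (t + φ y))) := NKAux.nuc1 hp _ _
      _ = p + ((q + (s + φ x)) + (t + φ y)) := by
            rw [← NKAux.nuc1 hq (s + φ x) (t + φ y)]
      _ = p + (((s + φ x) + q) + (t + φ y)) := by
            rw [NKAux.comm_nuc_KK hq hs ha]
      _ = p + ((s + φ x) + (q + (t + φ y))) := by
            rw [NKAux.nuc2 hq (s + φ x) (t + φ y)]
      _ = (p + (s + φ x)) + (q + (t + φ y)) := (NKAux.nuc1 hp _ _).symm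
      _ = ((p + s) + φ x) + ((q + t) + φ y) := by
            rw [← NKAux.nuc1 hp s (φ x), ← NKAux.nuc1 hq t (φ y)]
      _ = (x + φ x) + (y + φ y) := by rw [← hx1, ← hy1]
      _ = f x + f y := by rw [hf x, hf y]
  · intro x
    refine ⟨?_, ?_⟩
    · rw [hf x, NKAux.lip x (φ x)]
      exact hK x
    · rw [hf x, NKAux.need1 x (φ x)]
      exact hN x
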